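/- If a unitary U on n qubits conjugates every Pauli string to a scalar multiple of a Pauli string (i.e., U is a Clifford unitary), and U commutes with the total charge operator Z_1 + Z_2 + ... + Z_n, then for each site i there exists a site j and a sign s ∈ {+1, -1} such that U Z_i U† = s · Z_j; moreover, summing over i forces the map i ↦ j to be a permutation with all signs s = +1, so U Z_i U† = Z_{σ(i)} for some permutation σ. -/

import Mathlib

/-!
Pauli strings are orthogonal for the trace form, `tr (P Q) = 2ⁿ δ_{PQ}`, and conjugation by a
unitary preserves that form. Writing `U Z_i U† = c_i P_{Q_i}`, the coefficients `c_i` are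
therefore nonzero and the strings `Q_i` pairwise distinct. Conjugating `∑ Z_i` expresses `∑ Z_j`
as `∑ c_i P_{Q_i}`; comparing coefficients in the orthogonal basis of Pauli strings forces each
`Q_i` to be the word of some `Z_{σ i}` with `c_i = 1`, and `σ` is injective because the `Q_i`
are distinct.
-/

open Matrix

/-- Single-qubit Pauli matrices indexed by `Fin 4`: `0 ↦ I`, `1 ↦ X`, `2 ↦ Y`, `3 ↦ Z`. -/
noncomputable def pauliMat (k : Fin 4) : Matrix (Fin 2) (Fin 2) ℂ :=
  if k = 0 then 1
  else if k = 1 then !![0, 1; 1, 0]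
  else if k = 2 then !![0, -Complex.I; Complex.I, 0]
  else !![1, 0; 0, -1]

/-- A Pauli string on `n` qubits, as a matrix on `(ℂ²)^{⊗n}` realized with index set `Fin n → Fin 2`. -/
noncomputable def pauliString {n : ℕ} (P : Fin n → Fin 4) :
    Matrix (Fin n → Fin 2) (Fin n → Fin 2) ℂ :=
  fun x y => ∏ i, pauliMat (P i) (x i) (y i)

/-- The Pauli `Z` operator on qubit `i` (identity elsewhere). -/
noncomputable def Zop {n : ℕ} (i : Fin n) :
    Matrix (Fin n → Fin 2) (Fin n → Fin 2) ℂ :=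
  pauliString (fun j => if j = i then 3 else 0)

namespace Matrix

variable {ι m R : Type*} [Fintype ι] [Fintype m] [CommSemiring R]

def piKronecker (A : ι → Matrix m m R) : Matrix (ι → m) (ι → m) R :=
  of fun x y => ∏ i, A i (x i) (y i)

theorem piKronecker_mul [DecidableEq ι] (A B : ι → Matrix m m R) :
    piKronecker A * piKronecker B = piKronecker (A * B) := by
  ext x y
  simp only [piKronecker, mul_apply, of_apply, Pi.mul_apply, ← Finset.prod_mul_distrib]
  rw [Finset.prod_univ_sum, Fintype.piFinset_univ]

theorem trace_piKronecker [DecidableEq ι] (A : ι → Matrix m m R) :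
    trace (piKronecker A) = ∏ i, trace (A i) := by
  simp only [trace, diag, piKronecker, of_apply]
  rw [Finset.prod_univ_sum, Fintype.piFinset_univ]

theorem trace_conj_mul_conj [DecidableEq m] {U V : Matrix m m R} (hVU : V * U = 1)
    (A B : Matrix m m R) :
    trace (U * A * V * (U * B * V)) = trace (A * B) := by
  calc trace (U * A * V * (U * B * V)) = trace (U * (A * B) * V) := by
        rw [show U * A * V * (U * B * V) = U * (A * (V * U) * B) * V by
          simp only [Matrix.mul_assoc], hVU, Matrix.mul_one]
    _ = trace (V * U * (A * B)) := by rw [trace_mul_comm, Matrix.mul_assoc]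
    _ = trace (A * B) := by rw [hVU, Matrix.one_mul]

end Matrix

theorem trace_pauliMat_mul (a b : Fin 4) :
    trace (pauliMat a * pauliMat b) = if a = b then 2 else 0 := by
  fin_cases a <;> fin_cases b <;>
    norm_num +decide [pauliMat, trace, diag, mul_apply, Fin.sum_univ_two, Complex.ext_iff]

section PauliString

variable {n : ℕ}

theorem pauliString_eq_piKronecker (P : Fin n → Fin 4) :
    pauliString P = piKronecker (pauliMat ∘ P) := rfl

theorem trace_pauliString_mul (P Q : Fin n → Fin 4) :
    trace (pauliString P * pauliString Q) = if P = Q then 2 ^ n else 0 := by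
  simp only [pauliString_eq_piKronecker, piKronecker_mul, trace_piKronecker, Pi.mul_apply,
    Function.comp_apply, trace_pauliMat_mul, Fintype.prod_ite_zero, Finset.prod_const,
    Finset.card_univ, Fintype.card_fin, funext_iff]

theorem trace_sum_smul_pauliString_mul {ι : Type*} [Fintype ι] (c : ι → ℂ)
    (Q : ι → Fin n → Fin 4) (R : Fin n → Fin 4) :
    trace ((∑ i, c i • pauliString (Q i)) * pauliString R) = 2 ^ n * ∑ i with Q i = R, c i := by
  simp only [Finset.sum_mul, smul_mul, trace_sum, trace_smul, trace_pauliString_mul,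
    smul_eq_mul, Finset.sum_filter, Finset.mul_sum, mul_ite, mul_zero, zero_mul, mul_comm]

section Conjugation

variable {ι : Type*} {U : Matrix (Fin n → Fin 2) (Fin n → Fin 2) ℂ}
  {P Q : ι → Fin n → Fin 4} {c : ι → ℂ}

theorem coeff_mul_of_conj_pauliString (hU : Uᴴ * U = 1)
    (hconj : ∀ i, U * pauliString (P i) * Uᴴ = c i • pauliString (Q i)) (i k : ι) :
    c i * c k * (if Q i = Q k then 2 ^ n else 0) = if P i = P k then 2 ^ n else 0 := by
  have h := trace_conj_mul_conj hU (pauliString (P i)) (pauliString (P k))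
  rwa [hconj, hconj, smul_mul_smul_comm, trace_smul, trace_pauliString_mul,
    trace_pauliString_mul, smul_eq_mul] at h

theorem coeff_ne_zero_of_conj_pauliString (hU : Uᴴ * U = 1)
    (hconj : ∀ i, U * pauliString (P i) * Uᴴ = c i • pauliString (Q i)) (i : ι) : c i ≠ 0 := by
  intro hci
  simpa [hci] using (coeff_mul_of_conj_pauliString hU hconj i i).symm

theorem injective_of_conj_pauliString (hU : Uᴴ * U = 1)
    (hconj : ∀ i, U * pauliString (P i) * Uᴴ = c i • pauliString (Q i))
    (hP : Function.Injective P) : Function.Injective Q := by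
  intro i k hQ
  by_contra hik
  have h := coeff_mul_of_conj_pauliString hU hconj i k
  rw [if_pos hQ, if_neg (hP.ne hik)] at h
  simp [coeff_ne_zero_of_conj_pauliString hU hconj] at h

end Conjugation

theorem exists_eq_and_coeff_eq_one_of_sum_smul_pauliString_eq {ι κ : Type*}
    [Fintype ι] [Fintype κ] {c : ι → ℂ} {Q : ι → Fin n → Fin 4} {R : κ → Fin n → Fin 4}
    (hQ : Function.Injective Q) (hR : Function.Injective R) (hc : ∀ i, c i ≠ 0)
    (h : ∑ i, c i • pauliString (Q i) = ∑ j, pauliString (R j)) (k : ι) :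
    ∃ j, Q k = R j ∧ c k = 1 := by
  classical
  have hk : c k = ∑ j, if R j = Q k then 1 else 0 := by
    have h' : trace ((∑ i, c i • pauliString (Q i)) * pauliString (Q k)) =
        trace ((∑ j, (1 : ℂ) • pauliString (R j)) * pauliString (Q k)) := by
      simp only [one_smul, h]
    rw [trace_sum_smul_pauliString_mul, trace_sum_smul_pauliString_mul] at h'
    simpa only [Finset.sum_filter, hQ.eq_iff, Finset.sum_ite_eq', Finset.mem_univ, if_true] using
      mul_left_cancel₀ (pow_ne_zero n two_ne_zero) h'
  by_cases hex : ∃ j, R j = Q k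
  · obtain ⟨j, hj⟩ := hex
    exact ⟨j, hj.symm, by simpa [← hj, hR.eq_iff] using hk⟩
  · push Not at hex
    exact absurd (by simpa [hex] using hk) (hc k)

def zWord (i : Fin n) : Fin n → Fin 4 := fun j => if j = i then 3 else 0

theorem zWord_injective : Function.Injective (zWord (n := n)) := by
  intro i k h
  simpa [zWord] using congrFun h i

theorem Zop_eq_pauliString_zWord (i : Fin n) : Zop i = pauliString (zWord i) := rfl

end PauliString

/-- A Clifford unitary commuting with the total charge `∑ i, Z_i` conjugates each `Z_i` to
`± Z_j`, and in fact to `Z_{σ(i)}` for a permutation `σ` (all signs `+1`). -/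
theorem stmt0 {n : ℕ} (U : Matrix (Fin n → Fin 2) (Fin n → Fin 2) ℂ)
    (hU : U * Uᴴ = 1 ∧ Uᴴ * U = 1)
    (hClifford : ∀ P : Fin n → Fin 4, ∃ (c : ℂ) (Q : Fin n → Fin 4),
      U * pauliString P * Uᴴ = c • pauliString Q)
    (hU1 : U * (∑ i, Zop i) * Uᴴ = ∑ i, Zop i) :
    (∀ i : Fin n, ∃ (j : Fin n) (s : ℂ), (s = 1 ∨ s = -1) ∧
      U * Zop i * Uᴴ = s • Zop j) ∧
    ∃ σ : Equiv.Perm (Fin n), ∀ i, U * Zop i * Uᴴ = Zop (σ i) := by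
  choose c Q hconj using fun i => hClifford (zWord i)
  have hc := coeff_ne_zero_of_conj_pauliString hU.2 hconj
  have hQ := injective_of_conj_pauliString hU.2 hconj zWord_injective
  have hsum : ∑ i, c i • pauliString (Q i) = ∑ j, pauliString (zWord j) := by
    simpa only [Zop_eq_pauliString_zWord, Finset.mul_sum, Finset.sum_mul, hconj] using hU1
  choose σ hQσ hc1 using
    exists_eq_and_coeff_eq_one_of_sum_smul_pauliString_eq hQ zWord_injective hc hsum
  have hσ : ∀ i, U * Zop i * Uᴴ = Zop (σ i) := fun i => by
    rw [Zop_eq_pauliString_zWord, hconj, hc1, one_smul, hQσ, Zop_eq_pauliString_zWord]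
  have hσ_inj : Function.Injective σ := fun i k h => hQ (by rw [hQσ, hQσ, h])
  exact ⟨fun i => ⟨σ i, 1, Or.inl rfl, by rw [hσ, one_smul]⟩,
    Equiv.ofBijective σ hσ_inj.bijective_of_finite, hσ⟩
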